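/- arXiv:2605.10526 — 7 statements merged into one kernel-verified Lean document; each statement's English description precedes it below -/
import Mathlib

section
/- Let G = (V, E) be a simple graph on a finite vertex set V with nonnegative edge weights w_e ≥ 0, and let π be a distribution over subsets of V with marginals q_u and pairwise marginals q_{uv}. Then for every x : V → ℝ with 0 ≤ x_v ≤ 1 for all v ∈ V (in particular for every x in the matroid polytope P_f ⊆ [0,1]^V), F^π(x) ≥ (3/4)·L^π(x); moreover, if x is {0,1}-valued then F^π(x) = L^π(x). -/
/-!
Edge by edge, with `a = x_u`, `b = x_v` and `D = w_e^u + w_e^v - w_e^{uv} ≥ 0`, the defect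
`F - (3/4) L` is at least `D · ((a + b)/4 + (3/4) max(0, a + b - 1) - a b)`, because
`w_e^u, w_e^v ≥ D` (as `q_{uv} ≤ q_u, q_v`) and `D ≥ 0` (inclusion–exclusion,
`q_u + q_v - q_{uv} ≤ 1`). The bracket is nonnegative on `[0,1]²` by AM–GM applied to `a, b`
when `a + b ≤ 1` and to `1 - a, 1 - b` otherwise. On `{0,1}`-points
`x_u x_v = max(0, x_u + x_v - 1)`.
-/

open Finset

/-- The marginal probability that `u` is interdicted under distribution `π`. -/
def marg {V : Type*} [Fintype V] [DecidableEq V] (π : Finset V → ℝ) (u : V) : ℝ :=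
  ∑ S ∈ univ.filter (fun S : Finset V => u ∈ S), π S

/-- The pairwise marginal probability that both `u` and `v` are interdicted under `π`. -/
def marg2 {V : Type*} [Fintype V] [DecidableEq V] (π : Finset V → ℝ) (u v : V) : ℝ :=
  ∑ S ∈ univ.filter (fun S : Finset V => u ∈ S ∧ v ∈ S), π S

/-- The LP objective `L^π(x)` of the follower's relaxed problem. -/
def Lfun {V : Type*} [Fintype V] [DecidableEq V] (E : Finset (V × V)) (w : V × V → ℝ)
    (π : Finset V → ℝ) (x : V → ℝ) : ℝ :=
  ∑ e ∈ E,
    (x e.1 * (w e * (1 - marg π e.1)) + x e.2 * (w e * (1 - marg π e.2))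
      + max 0 (x e.1 + x e.2 - 1) *
        (w e * (1 - marg2 π e.1 e.2) - w e * (1 - marg π e.1) - w e * (1 - marg π e.2)))

/-- The auxiliary multilinear function `F^π(x)`. -/
def Ffun {V : Type*} [Fintype V] [DecidableEq V] (E : Finset (V × V)) (w : V × V → ℝ)
    (π : Finset V → ℝ) (x : V → ℝ) : ℝ :=
  ∑ e ∈ E,
    (x e.1 * (w e * (1 - marg π e.1)) + x e.2 * (w e * (1 - marg π e.2))
      + x e.1 * x e.2 *
        (w e * (1 - marg2 π e.1 e.2) - w e * (1 - marg π e.1) - w e * (1 - marg π e.2)))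

section Marginals

variable {V : Type*} [Fintype V] [DecidableEq V] {π : Finset V → ℝ}

lemma marg2_le_marg_left (hpos : ∀ S, 0 ≤ π S) (u v : V) : marg2 π u v ≤ marg π u :=
  sum_le_sum_of_subset_of_nonneg (monotone_filter_right _ fun _ _ h => h.1) fun S _ _ => hpos S

lemma marg2_le_marg_right (hpos : ∀ S, 0 ≤ π S) (u v : V) : marg2 π u v ≤ marg π v :=
  sum_le_sum_of_subset_of_nonneg (monotone_filter_right _ fun _ _ h => h.2) fun S _ _ => hpos S

lemma marg_add_marg_sub_marg2_le_one (hpos : ∀ S, 0 ≤ π S) (hsum : ∑ S, π S = 1) (u v : V) :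
    marg π u + marg π v - marg2 π u v ≤ 1 := by
  have hunion : marg π u + marg π v - marg2 π u v =
      ∑ S ∈ univ.filter (fun S : Finset V => u ∈ S ∨ v ∈ S), π S := by
    rw [marg, marg, marg2, filter_or, filter_and, ← sum_union_inter]
    ring
  rw [hunion, ← hsum]
  exact sum_le_sum_of_subset_of_nonneg (subset_univ _) fun S _ _ => hpos S

end Marginals

lemma mul_le_quarter_add_three_quarters_max {a b : ℝ} (ha : 0 ≤ a) (ha1 : a ≤ 1) (hb : 0 ≤ b)
    (hb1 : b ≤ 1) : a * b ≤ (a + b) / 4 + 3 / 4 * max 0 (a + b - 1) := by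
  rcases le_total (a + b) 1 with h | h
  · rw [max_eq_left (by linarith)]
    nlinarith [sq_nonneg (a - b)]
  · rw [max_eq_right (by linarith)]
    nlinarith [sq_nonneg (a - b)]

lemma three_quarters_mul_edge_L_le_edge_F {a b wu wv wuv : ℝ} (ha : 0 ≤ a)
    (ha1 : a ≤ 1) (hb : 0 ≤ b) (hb1 : b ≤ 1) (hu : wu ≤ wuv) (hv : wv ≤ wuv)
    (huv : wuv ≤ wu + wv) :
    3 / 4 * (a * wu + b * wv + max 0 (a + b - 1) * (wuv - wu - wv)) ≤
      a * wu + b * wv + a * b * (wuv - wu - wv) := by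
  have hD : 0 ≤ wu + wv - wuv := by linarith
  have hab := mul_le_mul_of_nonneg_right (mul_le_quarter_add_three_quarters_max ha ha1 hb hb1) hD
  nlinarith [mul_le_mul_of_nonneg_left (by linarith : wu + wv - wuv ≤ wu) ha,
    mul_le_mul_of_nonneg_left (by linarith : wu + wv - wuv ≤ wv) hb]

lemma mul_eq_max_zero_add_sub_one {a b : ℝ} (ha : a = 0 ∨ a = 1) (hb : b = 0 ∨ b = 1) :
    a * b = max 0 (a + b - 1) := by
  rcases ha with rfl | rfl <;> rcases hb with rfl | rfl <;> norm_num

theorem F_ge_three_quarters_L_general {V : Type*} [Fintype V] [DecidableEq V]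
    (E : Finset (V × V)) (w : V × V → ℝ) (hw : ∀ e ∈ E, 0 ≤ w e)
    (π : Finset V → ℝ) (hpos : ∀ S : Finset V, 0 ≤ π S)
    (hsum : ∑ S : Finset V, π S = 1)
    (x : V → ℝ) (hx : ∀ v : V, 0 ≤ x v ∧ x v ≤ 1) :
    (3 / 4) * Lfun E w π x ≤ Ffun E w π x ∧
    ((∀ v : V, x v = 0 ∨ x v = 1) → Ffun E w π x = Lfun E w π x) := by
  refine ⟨?_, fun h01 => sum_congr rfl fun e _ => by
    rw [mul_eq_max_zero_add_sub_one (h01 _) (h01 _)]⟩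
  rw [Lfun, Ffun, mul_sum]
  refine sum_le_sum fun e he => ?_
  have hmarg (u : V) (huv : marg2 π e.1 e.2 ≤ marg π u) :
      w e * (1 - marg π u) ≤ w e * (1 - marg2 π e.1 e.2) :=
    mul_le_mul_of_nonneg_left (by linarith) (hw e he)
  refine three_quarters_mul_edge_L_le_edge_F (hx _).1 (hx _).2 (hx _).1 (hx _).2
    (hmarg _ (marg2_le_marg_left hpos _ _)) (hmarg _ (marg2_le_marg_right hpos _ _)) ?_
  have hincl := mul_le_mul_of_nonneg_left
    (sub_nonneg.2 (marg_add_marg_sub_marg2_le_one hpos hsum e.1 e.2)) (hw e he)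
  linarith

/-- `F^π(x) ≥ (3/4)·L^π(x)` for every `x ∈ [0,1]^V`, with equality `F^π(x) = L^π(x)`
whenever `x` is {0,1}-valued. Edges are given as a finset `E` of ordered pairs,
each edge `e = uv` appearing once. -/
theorem F_ge_three_quarters_L {V : Type*} [Fintype V] [DecidableEq V]
    (E : Finset (V × V)) (w : V × V → ℝ) (hw : ∀ e ∈ E, 0 ≤ w e)
    (hloop : ∀ e ∈ E, e.1 ≠ e.2) (hori : ∀ e ∈ E, (e.2, e.1) ∉ E)
    (π : Finset V → ℝ) (hpos : ∀ S : Finset V, 0 ≤ π S)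
    (hsum : ∑ S : Finset V, π S = 1)
    (x : V → ℝ) (hx : ∀ v : V, 0 ≤ x v ∧ x v ≤ 1) :
    (3 / 4) * Lfun E w π x ≤ Ffun E w π x ∧
    ((∀ v : V, x v = 0 ∨ x v = 1) → Ffun E w π x = Lfun E w π x) :=
  F_ge_three_quarters_L_general E w hw π hpos hsum x hx
end

section
/- Let x_u, x_v, q_u, q_v, q_{uv} be real numbers with 0 ≤ x_u, 0 ≤ x_v, x_u + x_v ≤ 1, 0 ≤ q_u ≤ 1, 0 ≤ q_v ≤ 1, and q_u + q_v − 1 ≤ q_{uv} ≤ min(q_u, q_v). Then x_u·x_v·(1 − q_u − q_v + q_{uv}) ≤ (x_u(1 − q_u) + x_v(1 − q_v))/4. -/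
/-! By the Fréchet bounds, `t := 1 − q_u − q_v + q_{uv}` (the probability that neither endpoint
is interdicted) satisfies `0 ≤ t ≤ min(1 − q_u, 1 − q_v)`. Combined with AM–GM,
`x_u x_v ≤ (x_u + x_v)² / 4 ≤ (x_u + x_v) / 4` when `x_u + x_v ≤ 1`. -/

theorem mul_le_add_div_four_of_add_le_one {x y : ℝ} (hx : 0 ≤ x) (hy : 0 ≤ y)
    (hxy : x + y ≤ 1) : x * y ≤ (x + y) / 4 := by
  nlinarith [four_mul_le_sq_add x y]

theorem mul_mul_le_of_le_of_le {x y t a b : ℝ} (hx : 0 ≤ x) (hy : 0 ≤ y) (hxy : x + y ≤ 1)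
    (ht : 0 ≤ t) (hta : t ≤ a) (htb : t ≤ b) :
    x * y * t ≤ (x * a + y * b) / 4 :=
  calc x * y * t ≤ (x + y) / 4 * t :=
        mul_le_mul_of_nonneg_right (mul_le_add_div_four_of_add_le_one hx hy hxy) ht
    _ = (x * t + y * t) / 4 := by ring
    _ ≤ (x * a + y * b) / 4 := by gcongr

theorem case1_estimate_general (xu xv qu qv quv : ℝ)
    (hxu : 0 ≤ xu) (hxv : 0 ≤ xv) (hsum : xu + xv ≤ 1)
    (hlow : qu + qv - 1 ≤ quv) (hup : quv ≤ min qu qv) :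
    xu * xv * (1 - qu - qv + quv) ≤ (xu * (1 - qu) + xv * (1 - qv)) / 4 := by
  have hu : quv ≤ qu := hup.trans (min_le_left _ _)
  have hv : quv ≤ qv := hup.trans (min_le_right _ _)
  exact mul_mul_le_of_le_of_le hxu hxv hsum (by linarith) (by linarith) (by linarith)

/-- Per-edge estimate in Case 1 (`x_u + x_v ≤ 1`) of the proof that `F ≥ (3/4)·L`:
`x_u·x_v·(1 − q_u − q_v + q_{uv}) ≤ (x_u(1 − q_u) + x_v(1 − q_v))/4`. -/
theorem case1_estimate (xu xv qu qv quv : ℝ)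
    (hxu : 0 ≤ xu) (hxv : 0 ≤ xv) (hsum : xu + xv ≤ 1)
    (hqu0 : 0 ≤ qu) (hqu1 : qu ≤ 1) (hqv0 : 0 ≤ qv) (hqv1 : qv ≤ 1)
    (hlow : qu + qv - 1 ≤ quv) (hup : quv ≤ min qu qv) :
    xu * xv * (1 - qu - qv + quv) ≤ (xu * (1 - qu) + xv * (1 - qv)) / 4 :=
  case1_estimate_general xu xv qu qv quv hxu hxv hsum hlow hup
end

section
/- Let x_u, x_v, q_u, q_v, q_{uv} be real numbers with 0 ≤ x_u ≤ 1, 0 ≤ x_v ≤ 1, x_u + x_v ≥ 1, 0 ≤ q_u ≤ 1, 0 ≤ q_v ≤ 1, and q_u + q_v − 1 ≤ q_{uv} ≤ min(q_u, q_v). Then x_u(1 − q_u) + x_v(1 − q_v) − x_u·x_v·(1 − q_u − q_v + q_{uv}) ≥ (3/4)·[x_u(1 − q_u) + x_v(1 − q_v) − (x_u + x_v − 1)·(1 − q_u − q_v + q_{uv})]. -/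
/-!
Write `a = 1 - q_u`, `b = 1 - q_v` for the survival probabilities and `p = 1 - q_u - q_v + q_{uv}`
for the probability that both endpoints survive; the Fréchet bounds say `0 ≤ p ≤ min a b`.
The difference of the two sides is then
`(x_u (a - p) + x_v (b - p)) / 4 + p (1 - (1 - x_u)(1 - x_v) - 3/4)`,
and both terms are nonnegative: `(1 - x_u)(1 - x_v) ≤ 1/4` by AM-GM, since the two factors are
nonnegative with sum `2 - x_u - x_v ≤ 1`.
-/

theorem three_quarters_le_add_sub_mul {x y : ℝ} (hx : x ≤ 1) (hy : y ≤ 1) (hxy : 1 ≤ x + y) :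
    3 / 4 ≤ x + y - x * y := by
  have amgm : 4 * (1 - x) * (1 - y) ≤ ((1 - x) + (1 - y)) ^ 2 := four_mul_le_sq_add _ _
  have sum_sq_le : ((1 - x) + (1 - y)) ^ 2 ≤ 1 := pow_le_one₀ (by linarith) (by linarith)
  linarith

theorem case2_estimate_of_le_min {xu xv a b p : ℝ}
    (hxu0 : 0 ≤ xu) (hxu1 : xu ≤ 1) (hxv0 : 0 ≤ xv) (hxv1 : xv ≤ 1) (hsum : 1 ≤ xu + xv)
    (hp : 0 ≤ p) (hpa : p ≤ a) (hpb : p ≤ b) :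
    3 / 4 * (xu * a + xv * b - (xu + xv - 1) * p) ≤ xu * a + xv * b - xu * xv * p := by
  have hx := three_quarters_le_add_sub_mul hxu1 hxv1 hsum
  linear_combination (1 / 4) * mul_nonneg hxu0 (sub_nonneg.2 hpa)
    + (1 / 4) * mul_nonneg hxv0 (sub_nonneg.2 hpb) + mul_nonneg hp (sub_nonneg.2 hx)

theorem case2_estimate_general (xu xv qu qv quv : ℝ)
    (hxu0 : 0 ≤ xu) (hxu1 : xu ≤ 1) (hxv0 : 0 ≤ xv) (hxv1 : xv ≤ 1)
    (hsum : 1 ≤ xu + xv)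
    (hlow : qu + qv - 1 ≤ quv) (hup : quv ≤ min qu qv) :
    (3 / 4) * (xu * (1 - qu) + xv * (1 - qv) - (xu + xv - 1) * (1 - qu - qv + quv))
      ≤ xu * (1 - qu) + xv * (1 - qv) - xu * xv * (1 - qu - qv + quv) := by
  have hquv_qu : quv ≤ qu := hup.trans (min_le_left _ _)
  have hquv_qv : quv ≤ qv := hup.trans (min_le_right _ _)
  exact case2_estimate_of_le_min hxu0 hxu1 hxv0 hxv1 hsum (by linarith) (by linarith) (by linarith)

/-- Per-edge estimate in Case 2 (`x_u + x_v ≥ 1`) of the proof that `F ≥ (3/4)·L`. -/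
theorem case2_estimate (xu xv qu qv quv : ℝ)
    (hxu0 : 0 ≤ xu) (hxu1 : xu ≤ 1) (hxv0 : 0 ≤ xv) (hxv1 : xv ≤ 1)
    (hsum : 1 ≤ xu + xv)
    (hqu0 : 0 ≤ qu) (hqu1 : qu ≤ 1) (hqv0 : 0 ≤ qv) (hqv1 : qv ≤ 1)
    (hlow : qu + qv - 1 ≤ quv) (hup : quv ≤ min qu qv) :
    (3 / 4) * (xu * (1 - qu) + xv * (1 - qv) - (xu + xv - 1) * (1 - qu - qv + quv))
      ≤ xu * (1 - qu) + xv * (1 - qv) - xu * xv * (1 - qu - qv + quv) :=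
  case2_estimate_general xu xv qu qv quv hxu0 hxu1 hxv0 hxv1 hsum hlow hup
end

section
/- Let G = (V, E) be a simple graph on a finite vertex set V with nonnegative edge weights w_e ≥ 0, and let π be a distribution over subsets of V with marginals q_u and pairwise marginals q_{uv} (so that w_e^u + w_e^v − w_e^{uv} ≥ 0 for every edge e = uv). Then for every x : V → ℝ and every pair of vertices i, j ∈ V, the one-variable function g_x(t) = F^π(x + t·(e_i − e_j)) is convex on ℝ, where e_i denotes the i-th standard basis vector of ℝ^V. -/
/-!
Write `d = e_i − e_j`. Along the line `x + t d` every edge term of `F^π` is a quadratic in `t`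
with leading coefficient `(w_e^{uv} − w_e^u − w_e^v) d_u d_v`. The first factor equals
`w_e (q_u + q_v − q_{uv} − 1) ≤ 0` by inclusion–exclusion, and the second is `≤ 0` because
`u ≠ v` and the only nonzero entries of `d` are a `1` and a `−1`.
-/

open Finset

theorem ConvexOn.finset_sum {𝕜 E β ι : Type*} [Semiring 𝕜] [PartialOrder 𝕜]
    [AddCommMonoid E] [AddCommMonoid β] [PartialOrder β] [IsOrderedAddMonoid β]
    [SMul 𝕜 E] [Module 𝕜 β] {s : Set E} (hs : Convex 𝕜 s) (t : Finset ι) {f : ι → E → β}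
    (hf : ∀ i ∈ t, ConvexOn 𝕜 s (f i)) : ConvexOn 𝕜 s fun x => ∑ i ∈ t, f i x := by
  classical
  induction t using Finset.induction_on with
  | empty => simpa using convexOn_const 0 hs
  | insert i t hi ih =>
    simp only [sum_insert hi]
    exact (hf i (mem_insert_self i t)).add (ih fun k hk => hf k (mem_insert_of_mem hk))

theorem convexOn_quadratic {a : ℝ} (ha : 0 ≤ a) (b c : ℝ) :
    ConvexOn ℝ Set.univ fun t : ℝ => a * t ^ 2 + b * t + c :=
  (((even_two.convexOn_pow).smul ha).add
    ((LinearMap.mulLeft ℝ b).convexOn convex_univ)).add_const c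

theorem convexOn_bilinear_along_line (xu xv du dv A B C : ℝ) (h : 0 ≤ C * (du * dv)) :
    ConvexOn ℝ Set.univ fun t : ℝ =>
      (xu + t * du) * A + (xv + t * dv) * B + (xu + t * du) * (xv + t * dv) * C := by
  convert convexOn_quadratic h (du * A + dv * B + C * (du * xv + dv * xu))
    (xu * A + xv * B + xu * xv * C) using 2 with t
  ring

theorem marg_add_marg_sub_marg2_le_sum {V : Type*} [Fintype V] [DecidableEq V]
    {π : Finset V → ℝ} (hπ : ∀ S, 0 ≤ π S) (u v : V) :
    marg π u + marg π v - marg2 π u v ≤ ∑ S, π S := by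
  simp only [marg, marg2, sum_filter, ← sum_add_distrib, ← sum_sub_distrib]
  refine sum_le_sum fun S _ => ?_
  split_ifs <;> simp_all

theorem basis_sub_mul_basis_sub_nonpos {V : Type*} [DecidableEq V] {u v : V} (huv : u ≠ v)
    (i j : V) :
    ((if u = i then (1 : ℝ) else 0) - (if u = j then 1 else 0)) *
      ((if v = i then (1 : ℝ) else 0) - (if v = j then 1 else 0)) ≤ 0 := by
  split_ifs <;> subst_vars <;> norm_num at *

theorem F_directionally_convex_general {V : Type*} [Fintype V] [DecidableEq V]
    (E : Finset (V × V)) (w : V × V → ℝ) (hw : ∀ e ∈ E, 0 ≤ w e)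
    (hloop : ∀ e ∈ E, e.1 ≠ e.2)
    (π : Finset V → ℝ) (hpos : ∀ S : Finset V, 0 ≤ π S)
    (hsum : ∑ S : Finset V, π S = 1)
    (x : V → ℝ) (i j : V) :
    ConvexOn ℝ Set.univ (fun t : ℝ =>
      Ffun E w π (fun v =>
        x v + t * ((if v = i then (1 : ℝ) else 0) - (if v = j then (1 : ℝ) else 0)))) := by
  refine ConvexOn.finset_sum convex_univ E fun e he =>
    convexOn_bilinear_along_line _ _ _ _ _ _ _ ?_
  have hcross :
      w e * (1 - marg2 π e.1 e.2) - w e * (1 - marg π e.1) - w e * (1 - marg π e.2) ≤ 0 := by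
    nlinarith [hw e he, hsum ▸ marg_add_marg_sub_marg2_le_sum hpos e.1 e.2]
  exact mul_nonneg_of_nonpos_of_nonpos hcross
    (basis_sub_mul_basis_sub_nonpos (hloop e he) i j)

/-- `F^π` is convex along every direction `e_i − e_j`: for every `x : V → ℝ` and
vertices `i, j`, the one-variable function `t ↦ F^π(x + t·(e_i − e_j))` is convex on `ℝ`. -/
theorem F_directionally_convex {V : Type*} [Fintype V] [DecidableEq V]
    (E : Finset (V × V)) (w : V × V → ℝ) (hw : ∀ e ∈ E, 0 ≤ w e)
    (hloop : ∀ e ∈ E, e.1 ≠ e.2) (hori : ∀ e ∈ E, (e.2, e.1) ∉ E)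
    (π : Finset V → ℝ) (hpos : ∀ S : Finset V, 0 ≤ π S)
    (hsum : ∑ S : Finset V, π S = 1)
    (x : V → ℝ) (i j : V) :
    ConvexOn ℝ Set.univ (fun t : ℝ =>
      Ffun E w π (fun v =>
        x v + t * ((if v = i then (1 : ℝ) else 0) - (if v = j then (1 : ℝ) else 0)))) :=
  F_directionally_convex_general E w hw hloop π hpos hsum x i j
end

section
/- Let M_f be a matroid on a finite ground set V and let P_f ⊆ ℝ^V be the convex hull of the indicator vectors of the independent sets of M_f. Let G = (V, E) be a simple graph with nonnegative edge weights w_e ≥ 0 and π a distribution over subsets of V. Then for every x ∈ P_f there exists an independent set Î of M_f with L^π(1_Î) = F^π(1_Î) ≥ (3/4)·L^π(x). Consequently, writing Z^{LP} = max_{x ∈ P_f} L^π(x) and Z^{ILP} = max over independent sets I of M_f of L^π(1_I), one has (3/4)·Z^{LP} ≤ Z^{ILP} ≤ Z^{LP}; i.e., the LP relaxation of the follower's problem has integrality gap at most 4/3. -/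
open Finset

/-- The indicator vector of a finite vertex set. -/
def indVec {V : Type*} [DecidableEq V] (I : Finset V) : V → ℝ :=
  fun v => if v ∈ I then 1 else 0

/-- The matroid polytope: the convex hull of the indicator vectors of the independent sets. -/
def matroidPolytope {V : Type*} [Fintype V] [DecidableEq V] (M : Matroid V) : Set (V → ℝ) :=
  convexHull ℝ {y : V → ℝ | ∃ I : Finset V, M.Indep ↑I ∧ y = indVec I}

/-!
On `[0, 1]^V` one has `F^π ≥ (3/4) L^π` edge by edge: the two objectives share their linear
part, and the bilinear coefficient `w_e^{uv} - w_e^u - w_e^v` is nonpositive and at least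
`-min(w_e^u, w_e^v)`, so each edge reduces to an elementary inequality in two variables.
Since `L^π = F^π` on indicator vectors, it remains to round `x ∈ P_f` to an independent set
without decreasing `F^π`. Write `x` as a convex combination of indicator vectors and merge them
two at a time (pipage rounding). For `β 1_I + γ 1_J` with `v ∈ I \ J`, either `J + v` is
independent and `d = 1_v`, or the symmetric exchange property yields `y ∈ J \ I` with
`I - v + y` and `J - y + v` independent and `d = 1_v - 1_y`. Such a `d` has nonpositive
off-diagonal products, so `F^π` is convex along it; one of the endpoints `β 1_{I-d} + γ 1_J`,
`β 1_I + γ 1_{J+d}` is at least as good, and both shrink `I Δ J`.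
-/

def crossCoeff {V : Type*} [Fintype V] [DecidableEq V] (w : V × V → ℝ) (π : Finset V → ℝ)
    (e : V × V) : ℝ :=
  w e * (1 - marg2 π e.1 e.2) - w e * (1 - marg π e.1) - w e * (1 - marg π e.2)

section Marginals

variable {V : Type*} [Fintype V] [DecidableEq V] {π : Finset V → ℝ}

variable {w : V × V → ℝ} {e : V × V}

lemma crossCoeff_nonpos (hpos : ∀ S, 0 ≤ π S) (hsum : ∑ S, π S = 1) (hwe : 0 ≤ w e) :
    crossCoeff w π e ≤ 0 := by
  rw [show crossCoeff w π e = w e * (marg π e.1 + marg π e.2 - marg2 π e.1 e.2 - 1) by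
    rw [crossCoeff]; ring]
  exact mul_nonpos_of_nonneg_of_nonpos hwe
    (by linarith [marg_add_marg_sub_marg2_le_one hpos hsum e.1 e.2])

lemma add_crossCoeff_nonneg_left (hpos : ∀ S, 0 ≤ π S) (hwe : 0 ≤ w e) :
    0 ≤ w e * (1 - marg π e.1) + crossCoeff w π e := by
  rw [show w e * (1 - marg π e.1) + crossCoeff w π e = w e * (marg π e.2 - marg2 π e.1 e.2) by
    rw [crossCoeff]; ring]
  exact mul_nonneg hwe (sub_nonneg.2 (marg2_le_marg_right hpos e.1 e.2))

lemma add_crossCoeff_nonneg_right (hpos : ∀ S, 0 ≤ π S) (hwe : 0 ≤ w e) :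
    0 ≤ w e * (1 - marg π e.2) + crossCoeff w π e := by
  rw [show w e * (1 - marg π e.2) + crossCoeff w π e = w e * (marg π e.1 - marg2 π e.1 e.2) by
    rw [crossCoeff]; ring]
  exact mul_nonneg hwe (sub_nonneg.2 (marg2_le_marg_left hpos e.1 e.2))

end Marginals

/- With `s = a + b`, the bounds `W₁, W₂ ≥ -C` and `a * b ≤ s ^ 2 / 4` reduce both cases to
`s (1 - s) ≥ 0` on `[0, 1]` and `(s - 1) (3 - s) ≥ 0` on `[1, 2]`. -/
lemma three_quarters_mul_edge_le {a b W₁ W₂ C : ℝ} (ha : a ∈ Set.Icc (0 : ℝ) 1)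
    (hb : b ∈ Set.Icc (0 : ℝ) 1) (hC : C ≤ 0) (hW₁ : 0 ≤ W₁ + C) (hW₂ : 0 ≤ W₂ + C) :
    3 / 4 * (a * W₁ + b * W₂ + max 0 (a + b - 1) * C) ≤ a * W₁ + b * W₂ + a * b * C := by
  obtain ⟨ha₀, ha₁⟩ := ha
  obtain ⟨hb₀, hb₁⟩ := hb
  have h₁ : 0 ≤ a * (W₁ + C) := mul_nonneg ha₀ hW₁
  have h₂ : 0 ≤ b * (W₂ + C) := mul_nonneg hb₀ hW₂
  have h₃ : 0 ≤ (a - b) ^ 2 * -C := mul_nonneg (sq_nonneg _) (neg_nonneg.2 hC)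
  rcases le_or_gt (a + b) 1 with hab | hab
  · rw [max_eq_left (by linarith)]
    have : 0 ≤ (1 - (a + b)) * (a + b) * -C := by
      have : 0 ≤ (1 - (a + b)) * (a + b) := mul_nonneg (by linarith) (by linarith)
      exact mul_nonneg this (neg_nonneg.2 hC)
    nlinarith
  · rw [max_eq_right (by linarith)]
    have : 0 ≤ (a + b - 1) * (3 - (a + b)) * -C := by
      have : 0 ≤ (a + b - 1) * (3 - (a + b)) := mul_nonneg (by linarith) (by linarith)
      exact mul_nonneg this (neg_nonneg.2 hC)
    nlinarith

lemma indVec_mem_Icc {V : Type*} [DecidableEq V] (I : Finset V) (v : V) :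
    indVec I v ∈ Set.Icc (0 : ℝ) 1 := by
  by_cases h : v ∈ I <;> simp [indVec, h]

section Objectives

variable {V : Type*} [Fintype V] [DecidableEq V]

lemma Lfun_indVec (E : Finset (V × V)) (w : V × V → ℝ) (π : Finset V → ℝ) (I : Finset V) :
    Lfun E w π (indVec I) = Ffun E w π (indVec I) := by
  refine sum_congr rfl fun e _ ↦ ?_
  by_cases h₁ : e.1 ∈ I <;> by_cases h₂ : e.2 ∈ I <;> simp [indVec, h₁, h₂]

lemma three_quarters_mul_Lfun_le_Ffun {E : Finset (V × V)} {w : V × V → ℝ} {π : Finset V → ℝ}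
    (hw : ∀ e ∈ E, 0 ≤ w e) (hpos : ∀ S, 0 ≤ π S) (hsum : ∑ S, π S = 1) {x : V → ℝ}
    (hx : ∀ v, x v ∈ Set.Icc (0 : ℝ) 1) :
    3 / 4 * Lfun E w π x ≤ Ffun E w π x := by
  rw [Lfun, Ffun, mul_sum]
  exact sum_le_sum fun e he ↦ three_quarters_mul_edge_le (hx e.1) (hx e.2)
    (crossCoeff_nonpos hpos hsum (hw e he)) (add_crossCoeff_nonneg_left hpos (hw e he))
    (add_crossCoeff_nonneg_right hpos (hw e he))

lemma mem_Icc_of_mem_matroidPolytope {M : Matroid V} {x : V → ℝ} (hx : x ∈ matroidPolytope M)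
    (v : V) : x v ∈ Set.Icc (0 : ℝ) 1 := by
  have hsub : matroidPolytope M ⊆ Set.univ.pi fun _ ↦ Set.Icc (0 : ℝ) 1 :=
    convexHull_min (by rintro _ ⟨I, -, rfl⟩ v -; exact indVec_mem_Icc I v)
      (convex_pi fun _ _ ↦ convex_Icc 0 1)
  exact hsub hx v (Set.mem_univ v)

end Objectives

section Pipage

variable {V : Type*} [Fintype V] [DecidableEq V] {E : Finset (V × V)} {w : V × V → ℝ}
  {π : Finset V → ℝ}

lemma Ffun_add_smul (x d : V → ℝ) (t : ℝ) :
    Ffun E w π (x + t • d) = Ffun E w π x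
      + t * ∑ e ∈ E, (d e.1 * (w e * (1 - marg π e.1)) + d e.2 * (w e * (1 - marg π e.2))
          + (x e.1 * d e.2 + d e.1 * x e.2) * crossCoeff w π e)
      + t ^ 2 * ∑ e ∈ E, crossCoeff w π e * (d e.1 * d e.2) := by
  rw [mul_sum, mul_sum, Ffun, Ffun, ← sum_add_distrib, ← sum_add_distrib]
  refine sum_congr rfl fun e _ ↦ ?_
  simp only [Pi.add_apply, Pi.smul_apply, smul_eq_mul, crossCoeff]
  ring

/- By `hcc` and `hd`, the coefficient of `t ^ 2` in `Ffun (x + t • d)` (see `Ffun_add_smul`) is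
nonnegative, i.e. `Ffun` is convex along `d`. -/
lemma Ffun_le_or_le_of_mul_nonpos (hcc : ∀ e ∈ E, crossCoeff w π e ≤ 0)
    (hloop : ∀ e ∈ E, e.1 ≠ e.2) (x : V → ℝ) {d : V → ℝ} (hd : ∀ a b, a ≠ b → d a * d b ≤ 0)
    {β γ : ℝ} (hβ : 0 ≤ β) (hγ : 0 ≤ γ) :
    Ffun E w π x ≤ Ffun E w π (x + γ • d) ∨ Ffun E w π x ≤ Ffun E w π (x - β • d) := by
  have hQ : 0 ≤ ∑ e ∈ E, crossCoeff w π e * (d e.1 * d e.2) :=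
    sum_nonneg fun e he ↦ mul_nonneg_of_nonpos_of_nonpos (hcc e he) (hd _ _ (hloop e he))
  rcases hβ.eq_or_lt with rfl | hβ
  · simp
  rcases hγ.eq_or_lt with rfl | hγ
  · simp
  rw [sub_eq_add_neg, ← neg_smul, Ffun_add_smul, Ffun_add_smul]
  by_contra! h
  nlinarith [mul_pos hβ hγ, mul_pos (mul_pos hβ hγ) (add_pos hβ hγ)]

end Pipage

lemma Matroid.Indep.exists_symm_exchange {α : Type*} {M : Matroid α} {I J : Set α} {v : α}
    (hI : M.Indep I) (hJ : M.Indep J) (hvI : v ∈ I) (hvJ : v ∉ J) (hvcl : v ∈ M.closure J) :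
    ∃ y ∈ J \ I, M.Indep (insert y (I \ {v})) ∧ M.Indep (insert v J \ {y}) := by
  have hC := hJ.fundCircuit_isCircuit hvcl hvJ
  have hvIv : v ∉ M.closure (I \ {v}) := hI.notMem_closure_sdiff_of_mem hvI
  obtain ⟨y, hyC, hycl⟩ : ∃ y ∈ M.fundCircuit v J \ {v}, y ∉ M.closure (I \ {v}) := by
    by_contra! h
    exact hvIv (M.closure_subset_closure_of_subset_closure h
      (hC.mem_closure_sdiff_singleton_of_mem (M.mem_fundCircuit v J)))
  have hyJ : y ∈ J := by
    rw [fundCircuit_sdiff_eq_inter _ hvJ] at hyC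
    exact hyC.2
  have hyI : y ∉ I := fun hyI ↦ hycl (M.mem_closure_of_mem' ⟨hyI, hyC.2⟩ (hJ.subset_ground hyJ))
  refine ⟨y, ⟨hyJ, hyI⟩, ?_, (hJ.mem_fundCircuit_iff hvcl hvJ).1 hyC.1⟩
  exact ((hI.subset Set.sdiff_subset).insert_indep_iff_of_notMem fun h ↦ hyI h.1).2
    ⟨hJ.subset_ground hyJ, hycl⟩

section Exchange

variable {V : Type*} [DecidableEq V] {M : Matroid V}

lemma exists_pipage_exchange {I J : Finset V} (hI : M.Indep ↑I) (hJ : M.Indep ↑J) {v : V}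
    (hvI : v ∈ I) (hvJ : v ∉ J) :
    ∃ (I₁ J₁ : Finset V) (d : V → ℝ), M.Indep ↑I₁ ∧ M.Indep ↑J₁ ∧
      (∀ a b, a ≠ b → d a * d b ≤ 0) ∧ indVec I₁ = indVec I - d ∧ indVec J₁ = indVec J + d ∧
      symmDiff I₁ J ⊆ (symmDiff I J).erase v ∧ symmDiff I J₁ ⊆ (symmDiff I J).erase v := by
  by_cases hins : M.Indep (insert v (J : Set V))
  · refine ⟨I.erase v, insert v J, indVec {v}, hI.subset (by simp), by simpa using hins,
      ?_, ?_, ?_, ?_, ?_⟩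
    · intro a b hab
      simp only [indVec, mem_singleton]
      split_ifs <;> simp_all
    · funext a
      by_cases ha : a = v <;> simp [indVec, ha, hvI]
    · funext a
      by_cases ha : a = v <;> simp [indVec, ha, hvJ]
    · intro a
      simp only [mem_symmDiff, mem_erase]
      grind
    · intro a
      simp only [mem_symmDiff, mem_erase, mem_insert]
      grind
  · have hvcl : v ∈ M.closure J := by
      by_contra h
      exact hins ((hJ.insert_indep_iff_of_notMem (by simpa using hvJ)).2
        ⟨hI.subset_ground (by simpa using hvI), h⟩)
    obtain ⟨y, ⟨hyJ, hyI⟩, hI₁, hJ₁⟩ :=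
      hI.exists_symm_exchange hJ (by simpa using hvI) (by simpa using hvJ) hvcl
    simp only [mem_coe] at hyJ hyI
    have hyv : y ≠ v := by rintro rfl; exact hvJ hyJ
    refine ⟨insert y (I.erase v), insert v (J.erase y), indVec {v} - indVec {y},
      by simpa using hI₁, ?_, ?_, ?_, ?_, ?_, ?_⟩
    · convert hJ₁ using 1
      simp [Set.insert_sdiff_singleton_comm hyv.symm]
    · intro a b hab
      simp only [indVec, mem_singleton, Pi.sub_apply]
      split_ifs <;> simp_all
    · funext a
      by_cases ha : a = v <;> by_cases hb : a = y <;>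
        simp [indVec, ha, hb, hvI, hyI, hyv, hyv.symm]
    · funext a
      by_cases ha : a = v <;> by_cases hb : a = y <;>
        simp [indVec, ha, hb, hvJ, hyJ, hyv, hyv.symm]
    · intro a
      simp only [mem_symmDiff, mem_erase, mem_insert]
      grind
    · intro a
      simp only [mem_symmDiff, mem_erase, mem_insert]
      grind

end Exchange

section Rounding

variable {V : Type*} [Fintype V] [DecidableEq V] {M : Matroid V} {E : Finset (V × V)}
  {w : V × V → ℝ} {π : Finset V → ℝ}

lemma exists_indep_Ffun_add_smul_add_smul_le (hcc : ∀ e ∈ E, crossCoeff w π e ≤ 0)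
    (hloop : ∀ e ∈ E, e.1 ≠ e.2) (x : V → ℝ) {I J : Finset V} (hI : M.Indep ↑I)
    (hJ : M.Indep ↑J) {β γ : ℝ} (hβ : 0 ≤ β) (hγ : 0 ≤ γ) :
    ∃ K : Finset V, M.Indep ↑K ∧
      Ffun E w π (x + (β • indVec I + γ • indVec J)) ≤ Ffun E w π (x + (β + γ) • indVec K) := by
  induction hn : #(symmDiff I J) using Nat.strong_induction_on generalizing I J β γ with
  | _ n ih =>
  obtain hIJ | ⟨v, hv⟩ := (symmDiff I J).eq_empty_or_nonempty
  · rw [symmDiff_eq_bot.1 hIJ]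
    exact ⟨J, hJ, by rw [add_smul]⟩
  wlog hvI : v ∈ I generalizing I J β γ
  · obtain ⟨K, hK, hle⟩ := this hJ hI hγ hβ (by rwa [symmDiff_comm]) (by rwa [symmDiff_comm])
      ((mem_symmDiff.1 hv).resolve_left (by tauto)).1
    exact ⟨K, hK, by rwa [add_comm (β • _), add_comm β]⟩
  have hvJ : v ∉ J := ((mem_symmDiff.1 hv).resolve_right (by tauto)).2
  obtain ⟨I₁, J₁, d, hI₁, hJ₁, hd, hdI, hdJ, hsubI, hsubJ⟩ := exists_pipage_exchange hI hJ hvI hvJ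
  have hlt : #((symmDiff I J).erase v) < n := hn ▸ card_erase_lt_of_mem hv
  rcases Ffun_le_or_le_of_mul_nonpos hcc hloop (x + (β • indVec I + γ • indVec J)) hd hβ hγ
    with hle | hle
  · obtain ⟨K, hK, hKle⟩ := ih _ ((card_le_card hsubJ).trans_lt hlt) hI hJ₁ hβ hγ rfl
    refine ⟨K, hK, hle.trans (le_of_eq_of_le ?_ hKle)⟩
    rw [hdJ, smul_add]
    abel_nf
  · obtain ⟨K, hK, hKle⟩ := ih _ ((card_le_card hsubI).trans_lt hlt) hI₁ hJ hβ hγ rfl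
    refine ⟨K, hK, hle.trans (le_of_eq_of_le ?_ hKle)⟩
    rw [hdI, smul_sub]
    abel_nf

lemma exists_indep_Ffun_add_sum_le (hcc : ∀ e ∈ E, crossCoeff w π e ≤ 0)
    (hloop : ∀ e ∈ E, e.1 ≠ e.2) {ι : Type*} (t : Finset ι) {c : ι → ℝ}
    (hc : ∀ i ∈ t, 0 ≤ c i) {I : ι → Finset V} (hI : ∀ i ∈ t, M.Indep ↑(I i)) (x : V → ℝ) :
    ∃ K : Finset V, M.Indep ↑K ∧
      Ffun E w π (x + ∑ i ∈ t, c i • indVec (I i)) ≤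
        Ffun E w π (x + (∑ i ∈ t, c i) • indVec K) := by
  classical
  induction t using Finset.induction_on generalizing x with
  | empty => exact ⟨∅, by simp, by simp⟩
  | insert a s ha ih =>
    obtain ⟨K', hK', hle'⟩ := ih (fun i hi ↦ hc i (mem_insert_of_mem hi))
      (fun i hi ↦ hI i (mem_insert_of_mem hi)) (x + c a • indVec (I a))
    obtain ⟨K, hK, hle⟩ := exists_indep_Ffun_add_smul_add_smul_le hcc hloop x
      (hI a (mem_insert_self a s)) hK' (hc a (mem_insert_self a s))
      (sum_nonneg fun i hi ↦ hc i (mem_insert_of_mem hi))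
    refine ⟨K, hK, ?_⟩
    rw [sum_insert ha, sum_insert ha, ← add_assoc]
    exact hle'.trans (by rwa [← add_assoc] at hle)

lemma exists_indep_Ffun_le_of_mem_matroidPolytope (hcc : ∀ e ∈ E, crossCoeff w π e ≤ 0)
    (hloop : ∀ e ∈ E, e.1 ≠ e.2) {x : V → ℝ} (hx : x ∈ matroidPolytope M) :
    ∃ K : Finset V, M.Indep ↑K ∧ Ffun E w π x ≤ Ffun E w π (indVec K) := by
  obtain ⟨ι, _, c, y, hc, hc₁, hy, rfl⟩ := mem_convexHull_iff_exists_fintype.1 hx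
  choose I hI hyI using hy
  obtain ⟨K, hK, hle⟩ := exists_indep_Ffun_add_sum_le hcc hloop univ (fun i _ ↦ hc i)
    (fun i _ ↦ hI i) 0
  exact ⟨K, hK, by simpa [hyI, hc₁] using hle⟩

end Rounding

lemma mul_csSup_le_csSup_le_csSup_of_subset {A B : Set ℝ} {c : ℝ} (hc : 0 < c)
    (hB : BddAbove B) (hBne : B.Nonempty) (hBA : B ⊆ A) (h : ∀ a ∈ A, ∃ b ∈ B, c * a ≤ b) :
    c * sSup A ≤ sSup B ∧ sSup B ≤ sSup A := by
  have hAB : ∀ a ∈ A, a ≤ sSup B / c := fun a ha ↦ by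
    obtain ⟨b, hb, hab⟩ := h a ha
    exact (le_div_iff₀' hc).2 (hab.trans (le_csSup hB hb))
  exact ⟨(le_div_iff₀' hc).1 (csSup_le (hBne.mono hBA) hAB), csSup_le_csSup ⟨_, hAB⟩ hBne hBA⟩

theorem integrality_gap_general {V : Type*} [Fintype V] [DecidableEq V]
    (M : Matroid V)
    (E : Finset (V × V)) (w : V × V → ℝ) (hw : ∀ e ∈ E, 0 ≤ w e)
    (hloop : ∀ e ∈ E, e.1 ≠ e.2)
    (π : Finset V → ℝ) (hpos : ∀ S : Finset V, 0 ≤ π S)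
    (hsum : ∑ S : Finset V, π S = 1) :
    (∀ x ∈ matroidPolytope M, ∃ I : Finset V, M.Indep ↑I ∧
        Lfun E w π (indVec I) = Ffun E w π (indVec I) ∧
        (3 / 4) * Lfun E w π x ≤ Lfun E w π (indVec I)) ∧
    (3 / 4) * sSup (Lfun E w π '' matroidPolytope M)
        ≤ sSup {r : ℝ | ∃ I : Finset V, M.Indep ↑I ∧ r = Lfun E w π (indVec I)} ∧
    sSup {r : ℝ | ∃ I : Finset V, M.Indep ↑I ∧ r = Lfun E w π (indVec I)}
        ≤ sSup (Lfun E w π '' matroidPolytope M) := by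
  have hround : ∀ x ∈ matroidPolytope M, ∃ I : Finset V, M.Indep ↑I ∧
      Lfun E w π (indVec I) = Ffun E w π (indVec I) ∧
      (3 / 4) * Lfun E w π x ≤ Lfun E w π (indVec I) := by
    intro x hx
    obtain ⟨K, hK, hle⟩ := exists_indep_Ffun_le_of_mem_matroidPolytope
      (fun e he ↦ crossCoeff_nonpos hpos hsum (hw e he)) hloop hx
    refine ⟨K, hK, Lfun_indVec E w π K, ?_⟩
    rw [Lfun_indVec]
    exact (three_quarters_mul_Lfun_le_Ffun hw hpos hsum
      (mem_Icc_of_mem_matroidPolytope hx)).trans hle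
  set B := {r : ℝ | ∃ I : Finset V, M.Indep ↑I ∧ r = Lfun E w π (indVec I)}
  have hB : BddAbove B := ((Set.finite_range fun I : Finset V ↦ Lfun E w π (indVec I)).subset
    (by rintro _ ⟨I, -, rfl⟩; exact ⟨I, rfl⟩)).bddAbove
  have hBA : B ⊆ Lfun E w π '' matroidPolytope M := by
    rintro _ ⟨I, hI, rfl⟩
    exact ⟨_, subset_convexHull ℝ _ ⟨I, hI, rfl⟩, rfl⟩
  refine ⟨hround, mul_csSup_le_csSup_le_csSup_of_subset (by norm_num) hB ⟨_, ∅, by simp, rfl⟩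
    hBA ?_⟩
  rintro _ ⟨x, hx, rfl⟩
  obtain ⟨I, hI, -, hle⟩ := hround x hx
  exact ⟨_, ⟨I, hI, rfl⟩, hle⟩

/-- Integrality gap: every fractional `x` in the follower's matroid polytope can be rounded
to an independent set `Î` with `L^π(1_Î) = F^π(1_Î) ≥ (3/4)·L^π(x)`; consequently the
LP value `Z^{LP} = sup_{x ∈ P_f} L^π(x)` and the ILP value
`Z^{ILP} = max_{I independent} L^π(1_I)` satisfy `(3/4)·Z^{LP} ≤ Z^{ILP} ≤ Z^{LP}`. -/
theorem integrality_gap {V : Type*} [Fintype V] [DecidableEq V]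
    (M : Matroid V) (hM : M.E = Set.univ)
    (E : Finset (V × V)) (w : V × V → ℝ) (hw : ∀ e ∈ E, 0 ≤ w e)
    (hloop : ∀ e ∈ E, e.1 ≠ e.2) (hori : ∀ e ∈ E, (e.2, e.1) ∉ E)
    (π : Finset V → ℝ) (hpos : ∀ S : Finset V, 0 ≤ π S)
    (hsum : ∑ S : Finset V, π S = 1) :
    (∀ x ∈ matroidPolytope M, ∃ I : Finset V, M.Indep ↑I ∧
        Lfun E w π (indVec I) = Ffun E w π (indVec I) ∧
        (3 / 4) * Lfun E w π x ≤ Lfun E w π (indVec I)) ∧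
    (3 / 4) * sSup (Lfun E w π '' matroidPolytope M)
        ≤ sSup {r : ℝ | ∃ I : Finset V, M.Indep ↑I ∧ r = Lfun E w π (indVec I)} ∧
    sSup {r : ℝ | ∃ I : Finset V, M.Indep ↑I ∧ r = Lfun E w π (indVec I)}
        ≤ sSup (Lfun E w π '' matroidPolytope M) :=
  integrality_gap_general M E w hw hloop π hpos hsum
end

section
/- For every integer k ≥ 1 one has C(2k, 2) / (k·(2k − 1) − C(k, 2)) = (4k − 2)/(3k − 1), and this ratio tends to 4/3 as k → ∞. Hence the integrality gap of 4/3 for the LP relaxation of the follower's problem is asymptotically tight. -/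
open Filter Topology

lemma tendsto_affine_div_affine_atTop {a b c d : ℝ} (hc : c ≠ 0) :
    Tendsto (fun x : ℝ => (a * x + b) / (c * x + d)) atTop (𝓝 (a / c)) := by
  have hinv : Tendsto (fun x : ℝ => x⁻¹) atTop (𝓝 0) := tendsto_inv_atTop_zero
  have hnum : Tendsto (fun x : ℝ => a + b * x⁻¹) atTop (𝓝 a) := by
    simpa using tendsto_const_nhds.add (hinv.const_mul b)
  have hden : Tendsto (fun x : ℝ => c + d * x⁻¹) atTop (𝓝 c) := by
    simpa using tendsto_const_nhds.add (hinv.const_mul d)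
  refine (hnum.div hden hc).congr' ?_
  filter_upwards [eventually_gt_atTop 0] with x hx
  simp only [Pi.div_apply]
  field_simp

lemma cast_choose_two_two_mul (k : ℕ) : ((2 * k).choose 2 : ℝ) = k * (2 * k - 1) := by
  rw [Nat.cast_choose_two]
  push_cast
  ring

lemma mul_two_mul_sub_one_sub_choose_two (k : ℕ) :
    (k : ℝ) * (2 * k - 1) - (k.choose 2 : ℕ) = k * (3 * k - 1) / 2 := by
  rw [Nat.cast_choose_two]
  ring

lemma choose_two_two_mul_div_eq {k : ℕ} (hk : 1 ≤ k) :
    ((2 * k).choose 2 : ℝ) / ((k : ℝ) * (2 * k - 1) - (k.choose 2 : ℕ))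
      = (4 * k - 2) / (3 * k - 1) := by
  have hk' : (1 : ℝ) ≤ k := by exact_mod_cast hk
  have hk0 : (k : ℝ) ≠ 0 := by positivity
  have hden : (3 * k - 1 : ℝ) ≠ 0 := by linarith
  rw [cast_choose_two_two_mul, mul_two_mul_sub_one_sub_choose_two]
  field_simp
  ring

/-- Tightness of the `4/3` integrality gap: for every `k ≥ 1`,
`C(2k,2) / (k·(2k − 1) − C(k,2)) = (4k − 2)/(3k − 1)`, and this ratio tends to `4/3`
as `k → ∞`. -/
theorem integrality_gap_tight :
    (∀ k : ℕ, 1 ≤ k →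
      (((2 * k).choose 2 : ℝ)) / ((k : ℝ) * (2 * (k : ℝ) - 1) - ((k.choose 2 : ℕ) : ℝ))
        = (4 * (k : ℝ) - 2) / (3 * (k : ℝ) - 1)) ∧
    Filter.Tendsto
      (fun k : ℕ =>
        (((2 * k).choose 2 : ℝ)) / ((k : ℝ) * (2 * (k : ℝ) - 1) - ((k.choose 2 : ℕ) : ℝ)))
      Filter.atTop (nhds (4 / 3)) := by
  refine ⟨fun k hk => choose_two_two_mul_div_eq hk, ?_⟩
  have hlim := (tendsto_affine_div_affine_atTop (a := 4) (b := -2) (c := 3) (d := -1)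
    (by norm_num)).comp tendsto_natCast_atTop_atTop
  refine hlim.congr' ?_
  filter_upwards [eventually_ge_atTop 1] with k hk
  simp only [Function.comp_apply, choose_two_two_mul_div_eq hk, ← sub_eq_add_neg]
end

section
/- Let G = (V, E) be a simple graph on a finite vertex set V with nonnegative edge weights w_e ≥ 0, let π be a distribution over subsets of V, and let q : V → ℝ be its marginal vector, q_v = ∑_{S : v ∈ S} π(S). Then for every x : V → ℝ with 0 ≤ x_v ≤ 1 for all v ∈ V, (1/2)·L̃^q(x) ≤ L^π(x) ≤ L̃^q(x). -/
open Finset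

/-- The linearized surrogate `L̃^q(x) = ∑_{e=uv} w_e·[x_u(1 − q_u) + x_v(1 − q_v)]`. -/
def Ltilde {V : Type*} (E : Finset (V × V)) (w : V × V → ℝ)
    (q : V → ℝ) (x : V → ℝ) : ℝ :=
  ∑ e ∈ E, w e * (x e.1 * (1 - q e.1) + x e.2 * (1 - q e.2))

/- On each edge `uv`, `L^π` differs from `L̃^q` by `w_e · max(0, x_u + x_v − 1) · c_uv`, where
`c_uv = 1 − q_u − q_v + q_uv` is the probability that neither endpoint lies in `S`.
By inclusion–exclusion `0 ≤ c_uv ≤ min(1 − q_u, 1 − q_v)`, and `max(0, x_u + x_v − 1)` lies between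
`0` and `min(x_u, x_v)`; so the correction is nonnegative and at most the smaller of the two
summands of `L̃^q`, hence at most half their sum. -/

section Marginals

variable {V : Type*} [Fintype V] [DecidableEq V] {π : Finset V → ℝ}

def neitherMarg (π : Finset V → ℝ) (u v : V) : ℝ :=
  1 - marg π u - marg π v + marg2 π u v

lemma neitherMarg_nonneg (hpos : ∀ S, 0 ≤ π S) (hsum : ∑ S : Finset V, π S = 1) (u v : V) :
    0 ≤ neitherMarg π u v := by
  have hunion := sum_union_inter (s₁ := univ.filter fun S : Finset V => u ∈ S)
    (s₂ := univ.filter fun S : Finset V => v ∈ S) (f := π)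
  rw [← filter_and] at hunion
  have hle : ∑ S ∈ (univ.filter fun S : Finset V => u ∈ S) ∪
      (univ.filter fun S : Finset V => v ∈ S), π S ≤ 1 :=
    hsum ▸ sum_le_sum_of_subset_of_nonneg (subset_univ _) fun S _ _ => hpos S
  rw [neitherMarg, marg, marg, marg2]
  linarith

lemma neitherMarg_le_left (hpos : ∀ S, 0 ≤ π S) (u v : V) :
    neitherMarg π u v ≤ 1 - marg π u := by
  have := marg2_le_marg_right hpos u v
  rw [neitherMarg]
  linarith

lemma neitherMarg_le_right (hpos : ∀ S, 0 ≤ π S) (u v : V) :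
    neitherMarg π u v ≤ 1 - marg π v := by
  have := marg2_le_marg_left hpos u v
  rw [neitherMarg]
  linarith

lemma Lfun_eq_sum_sub_neitherMarg (E : Finset (V × V)) (w : V × V → ℝ) (x : V → ℝ) :
    Lfun E w π x = ∑ e ∈ E, w e * (x e.1 * (1 - marg π e.1) + x e.2 * (1 - marg π e.2)
      - max 0 (x e.1 + x e.2 - 1) * neitherMarg π e.1 e.2) :=
  sum_congr rfl fun e _ => by rw [neitherMarg]; ring

end Marginals

lemma max_zero_add_sub_one_mul_le {a b c d : ℝ} (ha : 0 ≤ a) (hb : b ≤ 1) (hc : 0 ≤ c)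
    (hcd : c ≤ d) : max 0 (a + b - 1) * c ≤ a * d :=
  mul_le_mul (max_le ha (by linarith)) hcd hc ha

lemma half_le_sub_max_zero_add_sub_one_mul {a b p r c : ℝ} (ha : 0 ≤ a ∧ a ≤ 1)
    (hb : 0 ≤ b ∧ b ≤ 1) (hc : 0 ≤ c) (hcp : c ≤ 1 - p) (hcr : c ≤ 1 - r) :
    (a * (1 - p) + b * (1 - r)) / 2 ≤ a * (1 - p) + b * (1 - r) - max 0 (a + b - 1) * c := by
  have hle_a := max_zero_add_sub_one_mul_le ha.1 hb.2 hc hcp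
  have hle_b := max_zero_add_sub_one_mul_le hb.1 ha.2 hc hcr
  rw [add_comm b] at hle_b
  linarith

theorem L_between_half_Ltilde_and_Ltilde_general {V : Type*} [Fintype V] [DecidableEq V]
    (E : Finset (V × V)) (w : V × V → ℝ) (hw : ∀ e ∈ E, 0 ≤ w e)
    (π : Finset V → ℝ) (hpos : ∀ S : Finset V, 0 ≤ π S)
    (hsum : ∑ S : Finset V, π S = 1)
    (q : V → ℝ) (hq : ∀ v : V, q v = marg π v)
    (x : V → ℝ) (hx : ∀ v : V, 0 ≤ x v ∧ x v ≤ 1) :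
    (1 / 2) * Ltilde E w q x ≤ Lfun E w π x ∧ Lfun E w π x ≤ Ltilde E w q x := by
  obtain rfl : q = marg π := funext hq
  rw [Lfun_eq_sum_sub_neitherMarg, Ltilde, mul_sum]
  refine ⟨sum_le_sum fun e he => ?_, sum_le_sum fun e he => ?_⟩
  · rw [one_div_mul_eq_div, mul_div_assoc]
    exact mul_le_mul_of_nonneg_left (half_le_sub_max_zero_add_sub_one_mul (hx e.1) (hx e.2)
      (neitherMarg_nonneg hpos hsum e.1 e.2) (neitherMarg_le_left hpos e.1 e.2)
      (neitherMarg_le_right hpos e.1 e.2)) (hw e he)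
  · exact mul_le_mul_of_nonneg_left (sub_le_self _ (mul_nonneg (le_max_left _ _)
      (neitherMarg_nonneg hpos hsum e.1 e.2))) (hw e he)

/-- `(1/2)·L̃^q(x) ≤ L^π(x) ≤ L̃^q(x)` for every `x ∈ [0,1]^V`, where `q` is the marginal
vector of the distribution `π`. -/
theorem L_between_half_Ltilde_and_Ltilde {V : Type*} [Fintype V] [DecidableEq V]
    (E : Finset (V × V)) (w : V × V → ℝ) (hw : ∀ e ∈ E, 0 ≤ w e)
    (hloop : ∀ e ∈ E, e.1 ≠ e.2) (hori : ∀ e ∈ E, (e.2, e.1) ∉ E)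
    (π : Finset V → ℝ) (hpos : ∀ S : Finset V, 0 ≤ π S)
    (hsum : ∑ S : Finset V, π S = 1)
    (q : V → ℝ) (hq : ∀ v : V, q v = marg π v)
    (x : V → ℝ) (hx : ∀ v : V, 0 ≤ x v ∧ x v ≤ 1) :
    (1 / 2) * Ltilde E w q x ≤ Lfun E w π x ∧ Lfun E w π x ≤ Ltilde E w q x :=
  L_between_half_Ltilde_and_Ltilde_general E w hw π hpos hsum q hq x hx
end
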